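/- arXiv:2509.00173 — 2 statements merged into one kernel-verified Lean document; each statement's English description precedes it below -/
import Mathlib

section
/- Let n ≥ 1 and suppose for each i = 1,...,n we have points c_i, a_i, b_i, p in a metric space with constants M_i ≥ dist(a_i, b_i) and D_i ≥ max(dist(c_i,a_i), dist(c_i,b_i)). Let T ≥ 0 and set r_i = T/(2n) + M_i/2 + D_i. If dist(c_i, p) > r_i for every i, then the total overhead ∑_i (dist(a_i,p) + dist(p,b_i) − dist(a_i,b_i)) is strictly greater than T. -/
/-!
Each user's detour alone already costs more than its share `T / n`: the triangle inequality
through `a i` and through `b i` gives `dist (a i) p + dist p (b i) ≥ 2 (dist (c i) p - D i)`,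
which exceeds `T / n + M i ≥ T / n + dist (a i) (b i)`. Summing the `n` strict inequalities
gives the bound.
-/

open Finset

theorem Finset.lt_sum_of_forall_div_card_lt {ι K : Type*} [Field K] [LinearOrder K]
    [IsStrictOrderedRing K] {s : Finset ι} (hs : s.Nonempty) {f : ι → K} {T : K}
    (h : ∀ i ∈ s, T / #s < f i) : T < ∑ i ∈ s, f i :=
  calc T = ∑ _i ∈ s, T / #s := by
        rw [sum_const, nsmul_eq_mul, mul_div_cancel₀ _ (by exact_mod_cast hs.card_ne_zero)]
    _ < ∑ i ∈ s, f i := sum_lt_sum_of_nonempty hs h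

theorem lt_detour_overhead_of_lt_dist {X : Type*} [PseudoMetricSpace X] {a b c p : X}
    {M D t : ℝ} (hM : dist a b ≤ M) (ha : dist c a ≤ D) (hb : dist c b ≤ D)
    (h : t / 2 + M / 2 + D < dist c p) : t < dist a p + dist p b - dist a b := by
  have via_a := dist_triangle c a p
  have via_b := dist_triangle_right c p b
  linarith

theorem pruning_technique_one_general
    {X : Type*} [MetricSpace X] (n : ℕ) (hn : 1 ≤ n)
    (c a b : Fin n → X) (p : X) (M D : Fin n → ℝ) (T : ℝ)
    (hM : ∀ i, M i ≥ dist (a i) (b i))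
    (hD : ∀ i, D i ≥ max (dist (c i) (a i)) (dist (c i) (b i)))
    (h : ∀ i, dist (c i) p > T / (2 * n) + M i / 2 + D i) :
    ∑ i, (dist (a i) p + dist p (b i) - dist (a i) (b i)) > T := by
  refine lt_sum_of_forall_div_card_lt (univ_nonempty_iff.mpr ⟨⟨0, hn⟩⟩) fun i _ => ?_
  rw [card_univ, Fintype.card_fin]
  obtain ⟨ha, hb⟩ := max_le_iff.mp (hD i)
  refine lt_detour_overhead_of_lt_dist (hM i) ha hb ?_
  rw [div_div, mul_comm]
  exact h i

theorem pruning_technique_one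
    {X : Type*} [MetricSpace X] (n : ℕ) (hn : 1 ≤ n)
    (c a b : Fin n → X) (p : X) (M D : Fin n → ℝ) (T : ℝ) (hT : 0 ≤ T)
    (hM : ∀ i, M i ≥ dist (a i) (b i))
    (hD : ∀ i, D i ≥ max (dist (c i) (a i)) (dist (c i) (b i)))
    (h : ∀ i, dist (c i) p > T / (2 * n) + M i / 2 + D i) :
    ∑ i, (dist (a i) p + dist p (b i) - dist (a i) (b i)) > T :=
  pruning_technique_one_general n hn c a b p M D T hM hD h
end

section
/- Let l_1,...,l_m be a trip in Euclidean space with centroid c = (1/m)∑_j l_j, trip distance T = ∑_{j<m} dist(l_j, l_{j+1}), and let θ ≥ 0. Suppose p is a point with dist(c, p) > θ + T. Then for every detour index t, the trip overhead TO(p,t) = T'(p,t) − T satisfies TO(p,t) > θ, where T'(p,t) is the detoured trip distance via p at index t. -/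
theorem pruning_technique_three_single_user
    (d : ℕ) (m : ℕ) (hm : 2 ≤ m) (l : ℕ → EuclideanSpace ℝ (Fin d))
    (p c : EuclideanSpace ℝ (Fin d))
    (hc : c = (m : ℝ)⁻¹ • ∑ j ∈ Finset.range m, l j)
    (T : ℝ) (hT : T = ∑ j ∈ Finset.range (m - 1), dist (l j) (l (j + 1)))
    (θ : ℝ) (hθ : 0 ≤ θ) (h : dist c p > θ + T) :
    ∀ t < m - 1,
      ((∑ j ∈ (Finset.range (m - 1)).erase t, dist (l j) (l (j + 1))) +
          dist (l t) p + dist p (l (t + 1))) - T > θ := by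
  -- Step 1: there exists r < m with dist c p ≤ dist (l r) p
  have hm0 : (0 : ℝ) < (m : ℝ) := by positivity
  have hcent : dist c p ≤ (m : ℝ)⁻¹ * ∑ j ∈ Finset.range m, dist (l j) p := by
    have hcp : c - p = (m : ℝ)⁻¹ • ∑ j ∈ Finset.range m, (l j - p) := by
      rw [hc, Finset.sum_sub_distrib, smul_sub, Finset.sum_const, Finset.card_range,
        ← Nat.cast_smul_eq_nsmul ℝ, smul_smul, inv_mul_cancel₀ (ne_of_gt hm0), one_smul]
    rw [dist_eq_norm, hcp, norm_smul]
    have := norm_sum_le (Finset.range m) (fun j => l j - p)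
    have hinv : (0:ℝ) ≤ (m:ℝ)⁻¹ := by positivity
    calc ‖((m : ℝ)⁻¹ : ℝ)‖ * ‖∑ j ∈ Finset.range m, (l j - p)‖
        ≤ (m : ℝ)⁻¹ * ∑ j ∈ Finset.range m, ‖l j - p‖ := by
          rw [Real.norm_eq_abs, abs_of_nonneg hinv]
          exact mul_le_mul_of_nonneg_left this hinv
      _ = (m : ℝ)⁻¹ * ∑ j ∈ Finset.range m, dist (l j) p := by
          simp [dist_eq_norm]
  have hex : ∃ r < m, dist c p ≤ dist (l r) p := by
    by_contra hcon
    push_neg at hcon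
    have hlt : ∑ j ∈ Finset.range m, dist (l j) p < ∑ j ∈ Finset.range m, dist c p := by
      apply Finset.sum_lt_sum_of_nonempty
      · exact ⟨0, Finset.mem_range.mpr (by omega)⟩
      · intro j hj
        exact hcon j (Finset.mem_range.mp hj)
    rw [Finset.sum_const, Finset.card_range, nsmul_eq_mul] at hlt
    have h4 := mul_lt_mul_of_pos_left hlt (inv_pos.mpr hm0)
    rw [inv_mul_cancel_left₀ (ne_of_gt hm0)] at h4
    linarith
  obtain ⟨r, hr, hrp⟩ := hex
  -- chain lemma
  have chain : ∀ a b : ℕ, a ≤ b →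
      dist (l a) (l b) ≤ ∑ j ∈ Finset.Ico a b, dist (l j) (l (j + 1)) := by
    intro a b hab
    have := dist_le_range_sum_dist (fun i => l (a + i)) (b - a)
    rw [Finset.sum_Ico_eq_sum_range]
    have hba : a + (b - a) = b := by omega
    rw [hba] at this
    refine this.trans_eq ?_
    apply Finset.sum_congr rfl
    intro i _
    ring_nf
  intro t ht
  have htmem : t ∈ Finset.range (m - 1) := Finset.mem_range.mpr ht
  have hsplit : T = dist (l t) (l (t + 1)) +
      ∑ j ∈ (Finset.range (m - 1)).erase t, dist (l j) (l (j + 1)) := by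
    rw [hT, ← Finset.add_sum_erase _ _ htmem]
  set E := ∑ j ∈ (Finset.range (m - 1)).erase t, dist (l j) (l (j + 1)) with hE
  have hrp' : dist (l r) p > θ + T := lt_of_lt_of_le h hrp
  rcases le_or_gt r t with hrt | htr
  · -- r ≤ t : dist (l r) (l t) ≤ E
    have hsub : Finset.Ico r t ⊆ (Finset.range (m - 1)).erase t := by
      intro j hj
      rw [Finset.mem_Ico] at hj
      rw [Finset.mem_erase, Finset.mem_range]
      omega
    have h1 : dist (l r) (l t) ≤ E := by
      refine (chain r t hrt).trans ?_
      exact Finset.sum_le_sum_of_subset_of_nonneg hsub (fun j _ _ => dist_nonneg)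
    have h2 : dist (l r) p ≤ dist (l r) (l t) + dist (l t) p := dist_triangle _ _ _
    have h3 : (0:ℝ) ≤ dist p (l (t + 1)) := dist_nonneg
    linarith
  · -- t < r, so t + 1 ≤ r : dist (l (t+1)) (l r) ≤ E
    have hsub : Finset.Ico (t + 1) r ⊆ (Finset.range (m - 1)).erase t := by
      intro j hj
      rw [Finset.mem_Ico] at hj
      rw [Finset.mem_erase, Finset.mem_range]
      omega
    have h1 : dist (l (t + 1)) (l r) ≤ E := by
      refine (chain (t + 1) r htr).trans ?_
      exact Finset.sum_le_sum_of_subset_of_nonneg hsub (fun j _ _ => dist_nonneg)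
    have h2 : dist (l r) p ≤ dist (l r) (l (t + 1)) + dist (l (t + 1)) p :=
      dist_triangle _ _ _
    have h3 : (0:ℝ) ≤ dist (l t) p := dist_nonneg
    rw [dist_comm (l r) (l (t + 1))] at h2
    rw [dist_comm p (l (t + 1))]
    linarith
end
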